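/- arXiv:2505.07097 — 2 statements merged into one kernel-verified Lean document; each statement's English description precedes it below -/
import Mathlib

section
/- Let T be a bijective filling of the diagram of λ ⊢ n by 1,…,n. (i) For each a and each η ∈ S_{t_a}, the permutation η_T lies in R(T), and the assignments η ↦ η_T combine to an injective group homomorphism Π_a S_{t_a} → R(T). (ii) The image of this homomorphism normalizes C(T) and intersects it trivially, so the subgroup C̃(T) of S_n generated by C(T) and this image is an internal semidirect product of C(T) with Π_a S_{t_a}. (iii) The map sgn~ : C̃(T) → {±1} defined by sgn~(η_T·σ) = sgn(σ) (for η_T in the image and σ ∈ C(T)) is a well-defined group homomorphism. -/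
open MvPolynomial

noncomputable section

namespace HigherSpecht

open scoped Classical

/-- A tableau: a filling of the plane (row, column), `0`-indexed, with `0` outside the diagram. -/
abbrev Tab := ℕ × ℕ → ℕ

/-- A permutation of `ℕ` represents an element of `Sₙ` (acting on `{1, …, n}`)
when it fixes `0` and everything above `n`. -/
def SuppIn (n : ℕ) (w : Equiv.Perm ℕ) : Prop := ∀ i, i = 0 ∨ n < i → w i = i

/-- Descending locations of a permutation (one-line notation `w 1, …, w n`). -/
def DslSet (n : ℕ) (w : Equiv.Perm ℕ) : Finset ℕ :=
  (Finset.Ioo 0 n).filter fun i => w (i + 1) < w i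

/-- Ascending locations of a permutation. -/
def AslSet (n : ℕ) (w : Equiv.Perm ℕ) : Finset ℕ :=
  (Finset.Ioo 0 n).filter fun i => w i < w (i + 1)

/-- The row in which the entry `i` shows up in a tableau. -/
def rowIdx (T : Tab) (i : ℕ) : ℕ := sInf {r | ∃ c, T (r, c) = i}

/-- The column in which the entry `i` shows up in a tableau. -/
def colIdx (T : Tab) (i : ℕ) : ℕ := sInf {c | T (rowIdx T i, c) = i}

/-- The box containing the entry `i`. -/
def posOf (T : Tab) (i : ℕ) : ℕ × ℕ := (rowIdx T i, colIdx T i)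

/-- Descending indices of a (standard) tableau: `i` with the row of `i+1` strictly below
the row of `i`. -/
def DsiSet (n : ℕ) (T : Tab) : Finset ℕ :=
  (Finset.Ioo 0 n).filter fun i => rowIdx T i < rowIdx T (i + 1)

/-- `Dsi^c`, the complemented descent set `{n - i | i ∈ Dsi}`. -/
def Dsic (n : ℕ) (T : Tab) : Finset ℕ := (DsiSet n T).image fun i => n - i

/-- The entry of `ct_J(S)` at a box `c`: the number of elements of `J` smaller than the
entry of `S` at `c`. -/
def ctEntry (T : Tab) (J : Finset ℕ) (c : ℕ × ℕ) : ℕ := (J.filter fun j => j < T c).card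

/-- The cocharge tableau `ct(S)` of a standard tableau. -/
def ctTab (n : ℕ) (T : Tab) : Tab := fun c => ctEntry T (DsiSet n T) c

/-- The (total) cocharge `cc(S)`: the sum of the entries of `ct(S)`. -/
def ccStat (n : ℕ) (T : Tab) : ℕ :=
  ∑ i ∈ Finset.Icc 1 n, ctEntry T (DsiSet n T) (posOf T i)

/-- `T` is a bijective filling of the given set of cells by `1, …, n` (`n` the number of
cells), with `0` outside. -/
def IsFillingF (cells : Finset (ℕ × ℕ)) (T : Tab) : Prop :=
  (∀ c, c ∉ cells → T c = 0) ∧ Set.BijOn T ↑cells (Set.Icc 1 cells.card)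

/-- A bijective filling of a Young diagram. -/
def IsFilling (μ : YoungDiagram) (T : Tab) : Prop := IsFillingF μ.cells T

/-- A standard Young tableau of shape `μ`: entries strictly increase along rows and columns. -/
def IsStandard (μ : YoungDiagram) (T : Tab) : Prop :=
  IsFilling μ T ∧ ∀ c₁ ∈ μ.cells, ∀ c₂ ∈ μ.cells,
    c₁ ≠ c₂ → c₁.1 ≤ c₂.1 → c₁.2 ≤ c₂.2 → T c₁ < T c₂

/-! ### Robinson–Schensted -/

/-- Row insertion: insert `x` into a row, returning the new row and the bumped entry. -/
def rowInsert : ℕ → List ℕ → List ℕ × Option ℕ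
  | x, [] => ([x], none)
  | x, y :: ys =>
    if x < y then (x :: ys, some y)
    else
      let p := rowInsert x ys
      (y :: p.1, p.2)

/-- Insertion of an entry into a tableau, given as a list of rows. -/
def tabInsert : List (List ℕ) → ℕ → List (List ℕ)
  | [], x => [[x]]
  | r :: rs, x =>
    match rowInsert x r with
    | (r', none) => r' :: rs
    | (r', some y) => r' :: tabInsert rs y

/-- One-line notation of `w ∈ Sₙ`. -/
def oneLine (n : ℕ) (w : Equiv.Perm ℕ) : List ℕ := (List.range n).map fun i => w (i + 1)

/-- The insertion tableau of the first `m` letters of `w`, as a list of rows. -/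
def PtabListPart (n : ℕ) (w : Equiv.Perm ℕ) (m : ℕ) : List (List ℕ) :=
  ((oneLine n w).take m).foldl tabInsert []

/-- Entry of a list-of-rows tableau at a (0-indexed) cell. -/
def listEntry (t : List (List ℕ)) (c : ℕ × ℕ) : ℕ := (t.getD c.1 []).getD c.2 0

/-- The Robinson–Schensted insertion tableau `P(w)`. -/
def Ptab (n : ℕ) (w : Equiv.Perm ℕ) : Tab := fun c => listEntry (PtabListPart n w n) c

/-- The Robinson–Schensted recording tableau `Q(w)`: the entry of a cell is the step at
which the cell is added to the shape. -/
def Qtab (n : ℕ) (w : Equiv.Perm ℕ) : Tab := fun c =>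
  sInf {m | listEntry (PtabListPart n w m) c ≠ 0}

/-! ### Schützenberger evacuation -/

/-- One step of a jeu de taquin slide into the hole at `c`. -/
def slideOnce (T : Tab) (c : ℕ × ℕ) : Tab × (ℕ × ℕ) :=
  let rc : ℕ × ℕ := (c.1, c.2 + 1)
  let dc : ℕ × ℕ := (c.1 + 1, c.2)
  if T rc = 0 ∧ T dc = 0 then (T, c)
  else if T dc = 0 ∨ (T rc ≠ 0 ∧ T rc < T dc) then
    (Function.update (Function.update T c (T rc)) rc 0, rc)
  else
    (Function.update (Function.update T c (T dc)) dc 0, dc)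

/-- Jeu de taquin slide (with fuel). -/
def slide : ℕ → Tab → ℕ × ℕ → Tab × (ℕ × ℕ)
  | 0, T, c => (T, c)
  | k + 1, T, c =>
    let p := slideOnce T c
    if p.2 = c then (T, c) else slide k p.1 p.2

/-- The Schützenberger evacuation: repeatedly delete the minimal entry, slide into the hole,
decrement the remaining entries, and record the vacated cell. -/
def evacAux : ℕ → Tab → Tab
  | 0, _ => fun _ => 0
  | m + 1, T =>
    let c0 := posOf T 1
    let p := slide (m + 1) (Function.update T c0 0) c0
    Function.update (evacAux m fun c => p.1 c - 1) p.2 (m + 1)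

/-- The evacuation tableau `ev S` of a standard tableau with `n` boxes. -/
def evac (n : ℕ) (T : Tab) : Tab := evacAux n T

/-- `Q̃(w) := ev (Q w)`. -/
def Qt (n : ℕ) (w : Equiv.Perm ℕ) : Tab := evac n (Qtab n w)

/-! ### Row and column groups, higher Specht polynomials -/

/-- The identification of `Fin n` with `{1, …, n} ⊆ ℕ`. -/
def finShift (n : ℕ) : Fin n ≃ {i : ℕ // 1 ≤ i ∧ i ≤ n} where
  toFun j := ⟨(j : ℕ) + 1, by have := j.isLt; omega⟩
  invFun i := ⟨(i : ℕ) - 1, by have := i.2; omega⟩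
  left_inv j := by apply Fin.ext; simp
  right_inv i := by apply Subtype.ext; have := i.2; simp; omega

/-- Embedding of the permutations of `Fin n` into permutations of `ℕ` (acting on `{1, …, n}`). -/
def embedPerm (n : ℕ) (σ : Equiv.Perm (Fin n)) : Equiv.Perm ℕ :=
  σ.extendDomain (finShift n)

/-- The row group `R(T)` of a filling, as a finset of permutations of `Fin n`. -/
def rowFinset (n : ℕ) (T : Tab) : Finset (Equiv.Perm (Fin n)) :=
  Finset.univ.filter fun τ => ∀ i ∈ Finset.Icc 1 n, rowIdx T (embedPerm n τ i) = rowIdx T i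

/-- The column group `C(T)` of a filling, as a finset of permutations of `Fin n`. -/
def colFinset (n : ℕ) (T : Tab) : Finset (Equiv.Perm (Fin n)) :=
  Finset.univ.filter fun σ => ∀ i ∈ Finset.Icc 1 n, colIdx T (embedPerm n σ i) = colIdx T i

/-- The row group `R(T)` as a set of permutations of `ℕ`. -/
def rowGroupSet (n : ℕ) (T : Tab) : Set (Equiv.Perm ℕ) :=
  {w | SuppIn n w ∧ ∀ i ∈ Finset.Icc 1 n, rowIdx T (w i) = rowIdx T i}

/-- The column group `C(T)` as a set of permutations of `ℕ`. -/
def colGroupSet (n : ℕ) (T : Tab) : Set (Equiv.Perm ℕ) :=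
  {w | SuppIn n w ∧ ∀ i ∈ Finset.Icc 1 n, colIdx T (w i) = colIdx T i}

/-- The Young symmetrizer `ε_T = Σ_{σ ∈ C(T)} Σ_{τ ∈ R(T)} sgn(σ) σ τ` acting on polynomials
(permutations acting by permuting the variables). -/
def epsAct (n : ℕ) (T : Tab) (p : MvPolynomial ℕ ℚ) : MvPolynomial ℕ ℚ :=
  ∑ σ ∈ colFinset n T, ∑ τ ∈ rowFinset n T,
    (Equiv.Perm.sign σ : ℤ) • rename (⇑(embedPerm n σ * embedPerm n τ)) p

/-- The monomial `p_T^S = Π_i x_i^{h_i}`, where `h_i` is the entry of `ct S` in the box of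
`T` containing `i`. -/
def pTS (n : ℕ) (T S : Tab) : MvPolynomial ℕ ℚ :=
  ∏ i ∈ Finset.Icc 1 n, X i ^ ctEntry S (DsiSet n S) (posOf T i)

/-- `s_T^S`: the order of the stabilizer of `p_T^S` in `R(T)`. -/
def sTS (n : ℕ) (T S : Tab) : ℕ :=
  ((rowFinset n T).filter fun τ =>
    rename (⇑(embedPerm n τ)) (pTS n T S) = pTS n T S).card

/-- The higher Specht polynomial `F_T^S := ε_T p_T^S / s_T^S`. -/
def FTS (n : ℕ) (T S : Tab) : MvPolynomial ℕ ℚ :=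
  ((sTS n T S : ℚ)⁻¹) • epsAct n T (pTS n T S)

/-- The higher Specht polynomial `F_w := F_{P(w)}^{Q̃(w)}` of a permutation. -/
def Fw (n : ℕ) (w : Equiv.Perm ℕ) : MvPolynomial ℕ ℚ := FTS n (Ptab n w) (Qt n w)

/-- The elementary symmetric polynomial `e_r` in the variables `x_1, …, x_n`. -/
def esym (n r : ℕ) : MvPolynomial ℕ ℚ :=
  ∑ s ∈ (Finset.Icc 1 n).powersetCard r, ∏ i ∈ s, X i

/-- The representation `V^S`: the span of the higher Specht polynomials `F_T^S` over all
bijective fillings `T` of the given cells. -/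
def VS (n : ℕ) (cells : Finset (ℕ × ℕ)) (S : Tab) : Submodule ℚ (MvPolynomial ℕ ℚ) :=
  Submodule.span ℚ {p | ∃ T : Tab, IsFillingF cells T ∧ p = FTS n T S}

/-- Multiplication of a subspace of polynomials by a fixed polynomial. -/
def polyMul (q : MvPolynomial ℕ ℚ) (V : Submodule ℚ (MvPolynomial ℕ ℚ)) :
    Submodule ℚ (MvPolynomial ℕ ℚ) :=
  Submodule.map (LinearMap.mulLeft ℚ q) V

/-- The symmetric multiplier `Π_r e_r^{h_r}`. -/
def eProd (n : ℕ) (h : ℕ → ℕ) : MvPolynomial ℕ ℚ := ∏ r ∈ Finset.Icc 1 n, esym n r ^ h r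

/-- `V^S_h := (Π_r e_r^{h_r}) V^S`. -/
def VSh (n : ℕ) (cells : Finset (ℕ × ℕ)) (S : Tab) (h : ℕ → ℕ) :
    Submodule ℚ (MvPolynomial ℕ ℚ) :=
  polyMul (eProd n h) (VS n cells S)

/-! ### The representations `R_{n,I}` -/

/-- For `i ∈ I`, `r_i := #{j ∈ {1,…,n-1} \ I : j < i}`. -/
def rIdxI (n : ℕ) (I : Finset ℕ) (i : ℕ) : ℕ :=
  ((Finset.Ioo 0 n \ I).filter fun j => j < i).card

/-- The vector `h^S_I`, whose `r`-th entry (for `r ≥ 1`) is `#{i ∈ I \ Dsi^c(S) : r_i = r}`. -/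
def hSI (n : ℕ) (I : Finset ℕ) (S : Tab) : ℕ → ℕ := fun r =>
  if 1 ≤ r then ((I \ Dsic n S).filter fun i => rIdxI n I i = r).card else 0

/-- The indicator vector `h(I,S)` of the set `I \ Dsi^c(S)`. -/
def hInd (n : ℕ) (I : Finset ℕ) (S : Tab) : ℕ → ℕ := fun r =>
  if r ∈ I \ Dsic n S then 1 else 0

/-- `F_{w,I} := F_w · Π_{i ∈ I \ Dsl(w)} e_{r_i}`. -/
def FwI (n : ℕ) (I : Finset ℕ) (w : Equiv.Perm ℕ) : MvPolynomial ℕ ℚ :=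
  Fw n w * ∏ i ∈ I \ DslSet n w, esym n (rIdxI n I i)

/-- The homogeneous version `F^hom_{w,I} := F_w · Π_{i ∈ I \ Dsl(w)} e_i`. -/
def FwIhom (n : ℕ) (I : Finset ℕ) (w : Equiv.Perm ℕ) : MvPolynomial ℕ ℚ :=
  Fw n w * ∏ i ∈ I \ DslSet n w, esym n i

/-- The representation `R_{n,I}`: span of the `F_{w,I}` over `w` with `Dsl(w) ⊆ I`. -/
def RnI (n : ℕ) (I : Finset ℕ) : Submodule ℚ (MvPolynomial ℕ ℚ) :=
  Submodule.span ℚ {p | ∃ w : Equiv.Perm ℕ, SuppIn n w ∧ DslSet n w ⊆ I ∧ p = FwI n I w}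

/-- The homogeneous representation `R^hom_{n,I}`. -/
def RnIhom (n : ℕ) (I : Finset ℕ) : Submodule ℚ (MvPolynomial ℕ ℚ) :=
  Submodule.span ℚ {p | ∃ w : Equiv.Perm ℕ, SuppIn n w ∧ DslSet n w ⊆ I ∧ p = FwIhom n I w}

/-- The index type for the decomposition of `R_{n,I}`: pairs of a partition `λ ⊢ n` and a
standard Young tableau `S` of shape `λ` with `Dsi^c(S) ⊆ I`. -/
def SIdx (n : ℕ) (I : Finset ℕ) : Type :=
  {q : YoungDiagram × Tab // q.1.cells.card = n ∧ IsStandard q.1 q.2 ∧ Dsic n q.2 ⊆ I}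

/-! ### Ordered set partitions -/

/-- The cumulative values `j_h` attached to a subset `I ⊆ {1,…,n-1}` (`j_0 = 0`,
`j_h` the `h`-th smallest element, `j_{|I|+1} = n`). -/
def jval (n : ℕ) (I : Finset ℕ) (h : ℕ) : ℕ :=
  if h = 0 then 0 else if h ≤ I.card then (I.sort (· ≤ ·)).getD (h - 1) 0 else n

/-- The composition `comp_n I`, as a function of the index `0 ≤ h ≤ |I|`. -/
def compFun (n : ℕ) (I : Finset ℕ) (h : ℕ) : ℕ := jval n I (h + 1) - jval n I h

/-- The set `OP_{n,I}` of ordered set partitions of `{1,…,n}` into `|I| + 1` blocks whose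
sizes are given by `comp_n I` (blocks indexed by `ℕ`, empty from index `|I| + 1` on). -/
def OPset (n : ℕ) (I : Finset ℕ) : Set (ℕ → Finset ℕ) :=
  {B | (∀ h, I.card + 1 ≤ h → B h = ∅) ∧
       (∀ h₁ h₂, h₁ ≠ h₂ → Disjoint (B h₁) (B h₂)) ∧
       (∀ h ≤ I.card, (B h).card = compFun n I h) ∧
       Finset.Icc 1 n = (Finset.range (I.card + 1)).biUnion B}

/-- The natural action of a permutation on an ordered set partition. -/
def permOP (w : Equiv.Perm ℕ) (B : ℕ → Finset ℕ) : ℕ → Finset ℕ := fun h => (B h).image w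

/-! ### The quotient `R_{n,k}` -/

/-- Elementary symmetric polynomials in `Fin n` variables. -/
def esymFin (n r : ℕ) : MvPolynomial (Fin n) ℚ :=
  ∑ s ∈ (Finset.univ : Finset (Fin n)).powersetCard r, ∏ i ∈ s, X i

/-- The ideal defining `R_{n,k}`: generated by `x_i^k` and `e_r`, `n-k+1 ≤ r ≤ n`. -/
def Jnk (n k : ℕ) : Ideal (MvPolynomial (Fin n) ℚ) :=
  Ideal.span ((Set.range fun i : Fin n => (X i : MvPolynomial (Fin n) ℚ) ^ k) ∪
    {p | ∃ r, n - k + 1 ≤ r ∧ r ≤ n ∧ p = esymFin n r})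

/-- The map sending `x_i` (for `1 ≤ i ≤ n`) to the corresponding variable of
`ℚ[x_1, …, x_n]`, and all other variables to `0`. -/
def toFin (n : ℕ) : MvPolynomial ℕ ℚ →ₐ[ℚ] MvPolynomial (Fin n) ℚ :=
  aeval fun i => if h : 1 ≤ i ∧ i ≤ n then X (⟨i - 1, by omega⟩ : Fin n) else 0

/-- The quotient projection onto `R_{n,k}`. -/
def projNK (n k : ℕ) : MvPolynomial ℕ ℚ →ₐ[ℚ] (MvPolynomial (Fin n) ℚ ⧸ Jnk n k) :=
  (Ideal.Quotient.mkₐ ℚ (Jnk n k)).comp (toFin n)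

/-! ### Corners, insertions and the induction/extension operators -/

/-- `v` is an external corner of `μ`. -/
def IsCorner (μ : YoungDiagram) (v : ℕ × ℕ) : Prop :=
  v ∉ μ.cells ∧ ∃ ν : YoungDiagram, ν.cells = insert v μ.cells

/-- `S +̃ v := ev (ev S + v)`, where `+ v` places the entry `n + 1` in the box `v`. -/
def Sadd (n : ℕ) (S : Tab) (v : ℕ × ℕ) : Tab :=
  evac (n + 1) (Function.update (evac n S) v (n + 1))

/-- `δ^{S,v}`: `0` if `v` lies strictly below the row of `n` in `ev S`, and `1` otherwise. -/
def deltaSV (n : ℕ) (S : Tab) (v : ℕ × ℕ) : ℕ :=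
  if rowIdx (evac n S) n < v.1 then 0 else 1

/-- `h + δ·1_t`: add `δ` to the coordinate `t` of `h` when `t ≥ 1`; do nothing for `t = 0`. -/
def addAt (h : ℕ → ℕ) (t δ : ℕ) : ℕ → ℕ := fun r =>
  if r = t ∧ 1 ≤ t then h r + δ else h r

/-- The induction operator on a single summand:
`Ind_t V^S_h := ⊕_{v ∈ EC(λ)} V^{S +̃ v}_{h + δ^{S,v}·1_t}`. -/
def IndVSh (t n : ℕ) (μ : YoungDiagram) (S : Tab) (h : ℕ → ℕ) :
    Submodule ℚ (MvPolynomial ℕ ℚ) :=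
  ⨆ v : ℕ × ℕ, ⨆ _ : IsCorner μ v,
    VSh (n + 1) (insert v μ.cells) (Sadd n S v) (addAt h t (deltaSV n S v))

/-- The extension operator on a single summand:
`Ext V^S_h := ⊕_{v ∈ EC(λ), δ^{S,v} = 1} V^{S +̃ v}_h`. -/
def ExtVSh (n : ℕ) (μ : YoungDiagram) (S : Tab) (h : ℕ → ℕ) :
    Submodule ℚ (MvPolynomial ℕ ℚ) :=
  ⨆ v : ℕ × ℕ, ⨆ _ : IsCorner μ v ∧ deltaSV n S v = 1,
    VSh (n + 1) (insert v μ.cells) (Sadd n S v) h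

/-- `Ind_t R_{n,I}`, applied summand-by-summand to the decomposition of `R_{n,I}`. -/
def IndR (t n : ℕ) (I : Finset ℕ) : Submodule ℚ (MvPolynomial ℕ ℚ) :=
  ⨆ q : SIdx n I, IndVSh t n q.1.1 q.1.2 (hSI n I q.1.2)

/-- `Ext R_{n,I}`, applied summand-by-summand. -/
def ExtR (n : ℕ) (I : Finset ℕ) : Submodule ℚ (MvPolynomial ℕ ℚ) :=
  ⨆ q : SIdx n I, ExtVSh n q.1.1 q.1.2 (hSI n I q.1.2)

/-- `Ind_t R^hom_{n,I}`, applied summand-by-summand. -/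
def IndRhom (t n : ℕ) (I : Finset ℕ) : Submodule ℚ (MvPolynomial ℕ ℚ) :=
  ⨆ q : SIdx n I, IndVSh t n q.1.1 q.1.2 (hInd n I q.1.2)

/-- `Ext R^hom_{n,I}`, applied summand-by-summand. -/
def ExtRhom (n : ℕ) (I : Finset ℕ) : Submodule ℚ (MvPolynomial ℕ ℚ) :=
  ⨆ q : SIdx n I, ExtVSh n q.1.1 q.1.2 (hInd n I q.1.2)

/-- The lift `R̃_{n,k} = ⊕_{|I| = k-1} R_{n,I}` of the quotient `R_{n,k}`. -/
def Rtil (n k : ℕ) : Submodule ℚ (MvPolynomial ℕ ℚ) :=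
  ⨆ I : Finset ℕ, ⨆ _ : I ⊆ Finset.Ioo 0 n ∧ I.card + 1 = k, RnI n I

/-! ### The extended column group -/

/-- The length of column `c` of a tableau. -/
def colLenT (n : ℕ) (T : Tab) (c : ℕ) : ℕ :=
  ((Finset.range (n + 1)).filter fun r => T (r, c) ≠ 0).card

/-- `q_a`: the number of columns of length `> a` (columns of length `a` occupy the
`0`-indexed columns `q_a, …, q_a + t_a - 1`). -/
def qaT (n : ℕ) (T : Tab) (a : ℕ) : ℕ :=
  ((Finset.range (n + 1)).filter fun c => a < colLenT n T c).card

/-- `t_a`: the number of columns of length `a`. -/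
def taT (n : ℕ) (T : Tab) (a : ℕ) : ℕ :=
  ((Finset.range (n + 1)).filter fun c => colLenT n T c = a).card

/-- The function underlying the permutation `η_T`: the entry in row `j` of column `q_a + i`
is sent to the entry in row `j` of column `q_a + η(i)`; everything else is fixed. -/
def etaFun (n : ℕ) (T : Tab) (a : ℕ) (η : Equiv.Perm ℕ) : ℕ → ℕ := fun m =>
  let c := colIdx T m
  if 1 ≤ m ∧ m ≤ n ∧ qaT n T a ≤ c ∧ c < qaT n T a + taT n T a then
    T (rowIdx T m, qaT n T a + η (c - qaT n T a))
  else m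

/-- The set of the permutations `η_T` (over all `a ≥ 1` and all `η ∈ S_{t_a}`). -/
def etaSet (n : ℕ) (T : Tab) : Set (Equiv.Perm ℕ) :=
  {w | ∃ a, 1 ≤ a ∧ ∃ η : Equiv.Perm ℕ, (∀ i, taT n T a ≤ i → η i = i) ∧
    ⇑w = etaFun n T a η}

/-- The subgroup generated by the permutations `η_T` (a copy of `Π_a S_{t_a}`). -/
def etaSubgroup (n : ℕ) (T : Tab) : Subgroup (Equiv.Perm ℕ) :=
  Subgroup.closure (etaSet n T)

/-- The column group `C(T)` as a subgroup. -/
def colSubgroup (n : ℕ) (T : Tab) : Subgroup (Equiv.Perm ℕ) :=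
  Subgroup.closure (colGroupSet n T)

/-- The extended column group `C̃(T)`, generated by `C(T)` and the `η_T`. -/
def extColSubgroup (n : ℕ) (T : Tab) : Subgroup (Equiv.Perm ℕ) :=
  Subgroup.closure (colGroupSet n T ∪ etaSet n T)

/-- The sign of a permutation of `ℕ` supported on `{1, …, n}`. -/
def signOn (n : ℕ) (σ : Equiv.Perm ℕ) : ℤ :=
  if h : ∃ τ : Equiv.Perm (Fin n), embedPerm n τ = σ then
    (Equiv.Perm.sign h.choose : ℤ) else 0

/-! ### Semistandard tableaux, (generalized) cocharge tableaux -/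

/-- A semistandard filling of the given cells: rows weakly increase, columns strictly
increase (entries outside the cells are normalized to `0`). -/
def IsSSYTOn (cells : Finset (ℕ × ℕ)) (C : Tab) : Prop :=
  (∀ c ∉ cells, C c = 0) ∧
  (∀ c₁ ∈ cells, ∀ c₂ ∈ cells, c₁.1 = c₂.1 → c₁.2 ≤ c₂.2 → C c₁ ≤ C c₂) ∧
  (∀ c₁ ∈ cells, ∀ c₂ ∈ cells, c₁.2 = c₂.2 → c₁.1 < c₂.1 → C c₁ < C c₂)

/-- A generalized cocharge tableau with entries exactly `{0, …, k-1}`. -/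
def IsGCT (cells : Finset (ℕ × ℕ)) (C : Tab) (k : ℕ) : Prop :=
  IsSSYTOn cells C ∧ (∀ c ∈ cells, C c < k) ∧ ∀ h < k, ∃ c ∈ cells, C c = h

/-- The type of a generalized cocharge tableau: the set of cumulative multiplicities
`#{c : C c < h}` for `1 ≤ h ≤ k - 1`. -/
def gctType (cells : Finset (ℕ × ℕ)) (C : Tab) (k : ℕ) : Finset ℕ :=
  (Finset.Ico 1 k).image fun h => (cells.filter fun c => C c < h).card

/-- The standardization of a semistandard tableau: entries are replaced by `1, …, n`,
processing the values in increasing order and, for equal values, from left to right. -/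
def stdz (cells : Finset (ℕ × ℕ)) (C : Tab) : Tab := fun c =>
  if c ∈ cells then
    (cells.filter fun c' => C c' < C c ∨
      (C c' = C c ∧ (c'.2 < c.2 ∨ (c'.2 = c.2 ∧ c'.1 ≤ c.1)))).card
  else 0

/-- A cocharge tableau of shape `μ`: one of the form `ct S` for a standard `S`. -/
def IsCCT (μ : YoungDiagram) (C : Tab) : Prop :=
  ∃ S : Tab, IsStandard μ S ∧ ctTab μ.cells.card S = C

/-- `k` for a tableau: one more than the maximal entry. -/
def kOf (cells : Finset (ℕ × ℕ)) (C : Tab) : ℕ := cells.sup C + 1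

/-- `Dsp^c(C) := {n - i : i ∈ J}`, `J` the type of the cocharge tableau `C`. -/
def Dspc (n : ℕ) (cells : Finset (ℕ × ℕ)) (C : Tab) : Finset ℕ :=
  (gctType cells C (kOf cells C)).image fun i => n - i

/-- The entry sum `Σ(C)`. -/
def entrySum (cells : Finset (ℕ × ℕ)) (C : Tab) : ℕ := ∑ c ∈ cells, C c

/-- `C +̂ v := ct (ct⁻¹(C) +̃ v)`, where `ct⁻¹` is the standardization. -/
def Cadd (n : ℕ) (μ : YoungDiagram) (C : Tab) (v : ℕ × ℕ) : Tab :=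
  ctTab (n + 1) (Sadd n (stdz μ.cells C) v)

/-- The standard Young tableau `S⁰` of shape `μ` filling the rows consecutively. -/
def rowWordTab (μ : YoungDiagram) : Tab := fun c =>
  if c ∈ μ.cells then (∑ r ∈ Finset.range c.1, μ.rowLen r) + c.2 + 1 else 0

/-- The word of an ordered set partition: the blocks listed in order, each sorted
increasingly. -/
def opWord (k : ℕ) (B : ℕ → Finset ℕ) : List ℕ :=
  (List.range k).foldr (fun h acc => (B h).sort (· ≤ ·) ++ acc) []

/-- Renaming the variables of a power series along a permutation. -/
def permSeries (g : Equiv.Perm ℕ) (F : MvPowerSeries ℕ ℚ) : MvPowerSeries ℕ ℚ :=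
  fun m => F (Finsupp.mapDomain ⇑g⁻¹ m)

/-!
Write `π` for `η` shifted to act on the columns `q_a, …, q_a + t_a - 1`; it preserves column
lengths, and `η_T = T ∘ (id × π) ∘ T⁻¹` on `{1, …, n}`. Conjugation by `T` turns the
column-length-preserving permutations of the columns into a homomorphism to the row group, whose
image sends column `c` to column `π c` and therefore normalizes `C(T)`. A permutation preserving
rows and columns is trivial, so that image meets `C(T)` trivially; hence every element of `C̃(T)`
factors uniquely as `η_T σ`, and `sgn~` is multiplicative because the sign is invariant under
conjugation.
-/

section SemidirectProduct

open Subgroup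

variable {G : Type*} [Group G] {H K : Subgroup G}

theorem existsUnique_mul_of_le_normalizer (hHK : H ≤ normalizer K) (hdisj : H ⊓ K = ⊥)
    {g : G} (hg : g ∈ H ⊔ K) : ∃! p : G × G, p.1 ∈ H ∧ p.2 ∈ K ∧ g = p.1 * p.2 := by
  rw [← SetLike.mem_coe, coe_mul_of_left_le_normalizer_right H K hHK] at hg
  obtain ⟨h, hh, k, hk, rfl⟩ := hg
  refine ⟨(h, k), ⟨hh, hk, rfl⟩, ?_⟩
  rintro ⟨h', k'⟩ ⟨hh', hk', heq⟩
  have := mul_injective_of_disjoint (disjoint_iff.mpr hdisj)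
    (a₁ := (⟨h', hh'⟩, ⟨k', hk'⟩)) (a₂ := (⟨h, hh⟩, ⟨k, hk⟩)) heq.symm
  simp only [Prod.mk.injEq, Subtype.mk.injEq] at this
  rw [this.1, this.2]

theorem exists_extend_mul_of_le_normalizer {M : Type*} [Monoid M] (hHK : H ≤ normalizer K)
    (hdisj : H ⊓ K = ⊥) (χ : G → M) (hχ_mul : ∀ k₁ ∈ K, ∀ k₂ ∈ K, χ (k₁ * k₂) = χ k₁ * χ k₂)
    (hχ_conj : ∀ h ∈ H, ∀ k ∈ K, χ (h * k * h⁻¹) = χ k) :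
    ∃ f : G → M, (∀ h ∈ H, ∀ k ∈ K, f (h * k) = χ k) ∧
      ∀ g₁ ∈ H ⊔ K, ∀ g₂ ∈ H ⊔ K, f (g₁ * g₂) = f g₁ * f g₂ := by
  let f : G → M := fun g =>
    if hg : ∃ p : G × G, p.1 ∈ H ∧ p.2 ∈ K ∧ g = p.1 * p.2 then χ hg.choose.2 else 1
  have hf : ∀ h ∈ H, ∀ k ∈ K, f (h * k) = χ k := by
    intro h hh k hk
    have hex : ∃ p : G × G, p.1 ∈ H ∧ p.2 ∈ K ∧ h * k = p.1 * p.2 := ⟨(h, k), hh, hk, rfl⟩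
    obtain ⟨_, _, huniq⟩ := existsUnique_mul_of_le_normalizer hHK hdisj
      (mul_mem (mem_sup_left hh) (mem_sup_right hk) : h * k ∈ H ⊔ K)
    simp only [f, dif_pos hex, huniq _ hex.choose_spec, ← huniq (h, k) ⟨hh, hk, rfl⟩]
  refine ⟨f, hf, fun g₁ hg₁ g₂ hg₂ => ?_⟩
  rw [← SetLike.mem_coe, coe_mul_of_left_le_normalizer_right H K hHK] at hg₁ hg₂
  obtain ⟨h₁, hh₁, k₁, hk₁, rfl⟩ := hg₁
  obtain ⟨h₂, hh₂, k₂, hk₂, rfl⟩ := hg₂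
  have hconj : h₂⁻¹ * k₁ * h₂⁻¹⁻¹ ∈ K := (mem_normalizer_iff.mp (hHK (inv_mem hh₂)) k₁).mp hk₁
  calc f (h₁ * k₁ * (h₂ * k₂)) = f (h₁ * h₂ * (h₂⁻¹ * k₁ * h₂⁻¹⁻¹ * k₂)) := by group
    _ = χ k₁ * χ k₂ := by
      rw [hf _ (mul_mem hh₁ hh₂) _ (mul_mem hconj hk₂), hχ_mul _ hconj _ hk₂,
        hχ_conj _ (inv_mem hh₂) _ hk₁]
    _ = f (h₁ * k₁) * f (h₂ * k₂) := by rw [hf _ hh₁ _ hk₁, hf _ hh₂ _ hk₂]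

end SemidirectProduct

section SuppIn

variable {n : ℕ}

theorem SuppIn.mem_Icc {w : Equiv.Perm ℕ} (hw : SuppIn n w) {i : ℕ} (hi : i ∈ Finset.Icc 1 n) :
    w i ∈ Finset.Icc 1 n := by
  rw [Finset.mem_Icc] at hi ⊢
  by_contra h
  have := w.injective (hw (w i) (by omega))
  omega

/-- `R(T)` and `C(T)` are the cases `κ = rowIdx T` and `κ = colIdx T`. -/
def suppInStab {β : Type*} (n : ℕ) (κ : ℕ → β) : Subgroup (Equiv.Perm ℕ) where
  carrier := {w | SuppIn n w ∧ ∀ i ∈ Finset.Icc 1 n, κ (w i) = κ i}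
  one_mem' := ⟨fun _ _ => rfl, fun _ _ => rfl⟩
  mul_mem' := by
    rintro w₁ w₂ ⟨hs₁, hκ₁⟩ ⟨hs₂, hκ₂⟩
    refine ⟨fun i hi => ?_, fun i hi => ?_⟩
    · simp only [Equiv.Perm.mul_apply, hs₂ i hi, hs₁ i hi]
    · simp only [Equiv.Perm.mul_apply, hκ₁ _ (hs₂.mem_Icc hi), hκ₂ i hi]
  inv_mem' := by
    rintro w ⟨hs, hκ⟩
    have hs' : SuppIn n w⁻¹ := fun i hi => by rw [Equiv.Perm.inv_eq_iff_eq, hs i hi]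
    refine ⟨hs', fun i hi => ?_⟩
    simpa using (hκ _ (hs'.mem_Icc hi)).symm

theorem colSubgroup_eq_suppInStab (n : ℕ) (T : Tab) :
    colSubgroup n T = suppInStab n (colIdx T) :=
  Subgroup.closure_eq (suppInStab n (colIdx T))

theorem SuppIn.of_mem_colSubgroup {T : Tab} {σ : Equiv.Perm ℕ} (hσ : σ ∈ colSubgroup n T) :
    SuppIn n σ := by
  rw [colSubgroup_eq_suppInStab] at hσ
  exact hσ.1

theorem exists_embedPerm_eq {w : Equiv.Perm ℕ} (hw : SuppIn n w) :
    ∃ τ : Equiv.Perm (Fin n), embedPerm n τ = w := by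
  have hp : ∀ i, (1 ≤ w i ∧ w i ≤ n) ↔ (1 ≤ i ∧ i ≤ n) := fun i => by
    refine ⟨fun h => ?_, fun h => by simpa using hw.mem_Icc (Finset.mem_Icc.mpr h)⟩
    by_contra hi
    have := hw i (by omega)
    omega
  refine ⟨(finShift n).symm.permCongr (w.subtypePerm hp), Equiv.ext fun i => ?_⟩
  by_cases hi : 1 ≤ i ∧ i ≤ n
  · rw [embedPerm, Equiv.Perm.extendDomain_apply_subtype _ _ (b := i) hi]
    simp [Equiv.permCongr_apply]
  · rw [embedPerm, Equiv.Perm.extendDomain_apply_not_subtype _ _ (b := i) hi, hw i (by omega)]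

theorem embedPerm_mul (τ₁ τ₂ : Equiv.Perm (Fin n)) :
    embedPerm n (τ₁ * τ₂) = embedPerm n τ₁ * embedPerm n τ₂ :=
  map_mul (Equiv.Perm.extendDomainHom (finShift n)) τ₁ τ₂

theorem embedPerm_inv (τ : Equiv.Perm (Fin n)) : embedPerm n τ⁻¹ = (embedPerm n τ)⁻¹ :=
  map_inv (Equiv.Perm.extendDomainHom (finShift n)) τ

theorem signOn_embedPerm (τ : Equiv.Perm (Fin n)) :
    signOn n (embedPerm n τ) = (Equiv.Perm.sign τ : ℤ) := by
  have h : ∃ τ' : Equiv.Perm (Fin n), embedPerm n τ' = embedPerm n τ := ⟨τ, rfl⟩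
  rw [signOn, dif_pos h, Equiv.Perm.extendDomainHom_injective (finShift n) h.choose_spec]

theorem signOn_mul {w₁ w₂ : Equiv.Perm ℕ} (h₁ : SuppIn n w₁) (h₂ : SuppIn n w₂) :
    signOn n (w₁ * w₂) = signOn n w₁ * signOn n w₂ := by
  obtain ⟨τ₁, rfl⟩ := exists_embedPerm_eq h₁
  obtain ⟨τ₂, rfl⟩ := exists_embedPerm_eq h₂
  rw [← embedPerm_mul, signOn_embedPerm, signOn_embedPerm, signOn_embedPerm, map_mul,
    Units.val_mul]

theorem signOn_conj {w σ : Equiv.Perm ℕ} (hw : SuppIn n w) (hσ : SuppIn n σ) :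
    signOn n (w * σ * w⁻¹) = signOn n σ := by
  obtain ⟨ρ, rfl⟩ := exists_embedPerm_eq hw
  obtain ⟨τ, rfl⟩ := exists_embedPerm_eq hσ
  rw [← embedPerm_inv, ← embedPerm_mul, ← embedPerm_mul, signOn_embedPerm, signOn_embedPerm,
    Equiv.Perm.sign_mul, Equiv.Perm.sign_mul, Equiv.Perm.sign_inv, mul_right_comm,
    Int.units_mul_self, one_mul]

theorem signOn_eq_one_or {σ : Equiv.Perm ℕ} (hσ : SuppIn n σ) :
    signOn n σ = 1 ∨ signOn n σ = -1 := by
  obtain ⟨τ, rfl⟩ := exists_embedPerm_eq hσ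
  rcases Int.units_eq_one_or (Equiv.Perm.sign τ) with h | h <;> simp [signOn_embedPerm, h]

end SuppIn

theorem _root_.YoungDiagram.rowLen_le_card (μ : YoungDiagram) (i : ℕ) :
    μ.rowLen i ≤ μ.cells.card :=
  μ.rowLen_eq_card ▸ Finset.card_filter_le _ _

theorem _root_.YoungDiagram.colLen_le_card (μ : YoungDiagram) (j : ℕ) :
    μ.colLen j ≤ μ.cells.card :=
  μ.colLen_eq_card ▸ Finset.card_filter_le _ _

theorem _root_.YoungDiagram.colLen_eq_iff {μ : YoungDiagram} {a : ℕ} (ha : 1 ≤ a) (c : ℕ) :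
    μ.colLen c = a ↔ μ.rowLen a ≤ c ∧ c < μ.rowLen (a - 1) := by
  have h₁ := μ.mem_iff_lt_rowLen (i := a) (j := c)
  have h₂ := μ.mem_iff_lt_rowLen (i := a - 1) (j := c)
  rw [YoungDiagram.mem_iff_lt_colLen] at h₁ h₂
  omega

theorem card_filter_range_lt {L : ℕ} (N : ℕ) (h : L ≤ N) :
    ((Finset.range N).filter (· < L)).card = L := by
  rw [Finset.range_eq_Ico, Finset.Ico_filter_lt, Nat.card_Ico, min_eq_right h, Nat.sub_zero]

section Filling

variable {n : ℕ} {μ : YoungDiagram} {T : Tab}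

theorem IsFilling.apply_ne_zero_iff (hT : IsFilling μ T) (p : ℕ × ℕ) :
    T p ≠ 0 ↔ p ∈ μ.cells := by
  refine ⟨fun h => by_contra fun hp => h (hT.1 p hp), fun hp => ?_⟩
  have := (hT.2.mapsTo hp).1
  omega

theorem IsFilling.eq_of_apply_eq (hT : IsFilling μ T) {p q : ℕ × ℕ} (hp : p ∈ μ.cells)
    (h : T q = T p) : q = p :=
  hT.2.injOn ((hT.apply_ne_zero_iff q).mp (h ▸ (hT.apply_ne_zero_iff p).mpr hp)) hp h

theorem IsFilling.posOf_apply (hT : IsFilling μ T) {p : ℕ × ℕ} (hp : p ∈ μ.cells) :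
    posOf T (T p) = p := by
  have hrow : rowIdx T (T p) = p.1 := by
    rw [rowIdx, show {r | ∃ c, T (r, c) = T p} = {p.1} from Set.eq_singleton_iff_unique_mem.mpr
      ⟨⟨p.2, rfl⟩, fun r ⟨c, hc⟩ => congrArg Prod.fst (hT.eq_of_apply_eq hp hc)⟩,
      csInf_singleton]
  have hcol : colIdx T (T p) = p.2 := by
    rw [colIdx, hrow, show {c | T (p.1, c) = T p} = {p.2} from Set.eq_singleton_iff_unique_mem.mpr
      ⟨rfl, fun c hc => congrArg Prod.snd (hT.eq_of_apply_eq hp hc)⟩, csInf_singleton]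
  exact Prod.ext hrow hcol

theorem IsFilling.posOf_mem_cells_and_apply (hμ : μ.cells.card = n) (hT : IsFilling μ T) {m : ℕ}
    (hm : m ∈ Finset.Icc 1 n) : posOf T m ∈ μ.cells ∧ T (posOf T m) = m := by
  obtain ⟨p, hp, rfl⟩ := hT.2.surjOn (by simpa [hμ] using hm)
  rw [hT.posOf_apply hp]
  exact ⟨hp, rfl⟩

theorem IsFilling.colLenT_eq (hμ : μ.cells.card = n) (hT : IsFilling μ T) (c : ℕ) :
    colLenT n T c = μ.colLen c := by
  rw [colLenT, Finset.filter_congr fun r _ => by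
      rw [hT.apply_ne_zero_iff, YoungDiagram.mem_cells, YoungDiagram.mem_iff_lt_colLen],
    card_filter_range_lt _ (by have := μ.colLen_le_card c; omega)]

theorem IsFilling.colLen_eq_iff (hμ : μ.cells.card = n) (hT : IsFilling μ T) {a : ℕ}
    (ha : 1 ≤ a) (c : ℕ) :
    μ.colLen c = a ↔ qaT n T a ≤ c ∧ c < qaT n T a + taT n T a := by
  have hq : qaT n T a = μ.rowLen a := by
    rw [qaT, Finset.filter_congr fun c _ => by
        rw [hT.colLenT_eq hμ, ← YoungDiagram.mem_iff_lt_colLen, YoungDiagram.mem_iff_lt_rowLen],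
      card_filter_range_lt _ (by have := μ.rowLen_le_card a; omega)]
  have ht : taT n T a = μ.rowLen (a - 1) - μ.rowLen a := by
    have hle := μ.rowLen_le_card (a - 1)
    rw [taT, Finset.filter_congr fun c _ => by rw [hT.colLenT_eq hμ, μ.colLen_eq_iff ha],
      show (Finset.range (n + 1)).filter (fun c => μ.rowLen a ≤ c ∧ c < μ.rowLen (a - 1)) =
        Finset.Ico (μ.rowLen a) (μ.rowLen (a - 1)) by ext; simp; omega,
      Nat.card_Ico]
  have hanti := μ.rowLen_anti (a - 1) a (by omega)
  rw [μ.colLen_eq_iff ha, hq, ht]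
  omega

end Filling

def fiberStab {α β : Type*} (κ : α → β) : Subgroup (Equiv.Perm α) where
  carrier := {π | ∀ x, κ (π x) = κ x}
  one_mem' _ := rfl
  mul_mem' h₁ h₂ x := (h₁ _).trans (h₂ x)
  inv_mem' {π} h x := by simpa using (h (π⁻¹ x)).symm

section ColumnPermutation

variable {n : ℕ} {μ : YoungDiagram} {T : Tab}

def colPermFun (n : ℕ) (T : Tab) (π : ℕ → ℕ) : ℕ → ℕ := fun m =>
  if m ∈ Finset.Icc 1 n then T (rowIdx T m, π (colIdx T m)) else m

theorem colPermFun_of_notMem {π : ℕ → ℕ} {m : ℕ} (hm : m ∉ Finset.Icc 1 n) :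
    colPermFun n T π m = m :=
  if_neg hm

theorem IsFilling.apply_mem_Icc (hμ : μ.cells.card = n) (hT : IsFilling μ T) {p : ℕ × ℕ}
    (hp : p ∈ μ.cells) : T p ∈ Finset.Icc 1 n := by
  simpa [hμ] using hT.2.mapsTo hp

theorem IsFilling.colPermFun_spec (hμ : μ.cells.card = n) (hT : IsFilling μ T) {π : ℕ → ℕ}
    (hπ : ∀ c, μ.colLen (π c) = μ.colLen c) {m : ℕ} (hm : m ∈ Finset.Icc 1 n) :
    colPermFun n T π m ∈ Finset.Icc 1 n ∧
      posOf T (colPermFun n T π m) = (rowIdx T m, π (colIdx T m)) := by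
  have hcell : (rowIdx T m, π (colIdx T m)) ∈ μ.cells := by
    have := (hT.posOf_mem_cells_and_apply hμ hm).1
    rw [YoungDiagram.mem_cells, YoungDiagram.mem_iff_lt_colLen] at this ⊢
    rwa [hπ]
  rw [colPermFun, if_pos hm]
  exact ⟨hT.apply_mem_Icc hμ hcell, hT.posOf_apply hcell⟩

theorem IsFilling.colPermFun_comp (hμ : μ.cells.card = n) (hT : IsFilling μ T)
    (π₁ : ℕ → ℕ) {π₂ : ℕ → ℕ} (hπ₂ : ∀ c, μ.colLen (π₂ c) = μ.colLen c) :
    colPermFun n T (π₁ ∘ π₂) = colPermFun n T π₁ ∘ colPermFun n T π₂ := by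
  funext m
  by_cases hm : m ∈ Finset.Icc 1 n
  · obtain ⟨hm₂, hpos⟩ := hT.colPermFun_spec hμ hπ₂ hm
    rw [Function.comp_apply, colPermFun, if_pos hm, colPermFun, if_pos hm₂]
    exact congrArg (fun p : ℕ × ℕ => T (p.1, π₁ p.2)) hpos.symm
  · simp only [Function.comp_apply, colPermFun_of_notMem hm]

theorem IsFilling.colPermFun_id (hμ : μ.cells.card = n) (hT : IsFilling μ T) :
    colPermFun n T id = id := by
  funext m
  by_cases hm : m ∈ Finset.Icc 1 n
  · exact (if_pos hm).trans (hT.posOf_mem_cells_and_apply hμ hm).2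
  · exact colPermFun_of_notMem hm

def colPermEnd (hμ : μ.cells.card = n) (hT : IsFilling μ T) :
    fiberStab μ.colLen →* Function.End ℕ where
  toFun π := colPermFun n T π
  map_one' := hT.colPermFun_id hμ
  map_mul' π₁ π₂ := hT.colPermFun_comp hμ π₁ π₂.2

def colPerm (hμ : μ.cells.card = n) (hT : IsFilling μ T) :
    fiberStab μ.colLen →* Equiv.Perm ℕ :=
  (colPermEnd hμ hT).toHomPerm

theorem coe_colPerm (hμ : μ.cells.card = n) (hT : IsFilling μ T) (π : fiberStab μ.colLen) :
    ⇑(colPerm hμ hT π) = colPermFun n T π :=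
  rfl

theorem colPerm_mem_rowGroup (hμ : μ.cells.card = n) (hT : IsFilling μ T)
    (π : fiberStab μ.colLen) : colPerm hμ hT π ∈ suppInStab n (rowIdx T) :=
  ⟨fun _ hi => colPermFun_of_notMem (by rw [Finset.mem_Icc]; omega),
    fun _ hi => congrArg Prod.fst (hT.colPermFun_spec hμ π.2 hi).2⟩

theorem colIdx_colPerm (hμ : μ.cells.card = n) (hT : IsFilling μ T) (π : fiberStab μ.colLen)
    {m : ℕ} (hm : m ∈ Finset.Icc 1 n) :
    colIdx T (colPerm hμ hT π m) = (π : Equiv.Perm ℕ) (colIdx T m) :=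
  congrArg Prod.snd (hT.colPermFun_spec hμ π.2 hm).2

theorem colPerm_conj_mem_colGroup (hμ : μ.cells.card = n) (hT : IsFilling μ T)
    (π : fiberStab μ.colLen) {σ : Equiv.Perm ℕ} (hσ : σ ∈ suppInStab n (colIdx T)) :
    colPerm hμ hT π * σ * (colPerm hμ hT π)⁻¹ ∈ suppInStab n (colIdx T) := by
  set w := colPerm hμ hT π
  have hw : w ∈ suppInStab n (rowIdx T) := colPerm_mem_rowGroup hμ hT π
  have hw' := inv_mem hw
  refine ⟨fun i hi => ?_, fun i hi => ?_⟩
  · simp only [Equiv.Perm.mul_apply, hw'.1 i hi, hσ.1 i hi, hw.1 i hi]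
  · have hj := hw'.1.mem_Icc hi
    have hij : w (w⁻¹ i) = i := w.apply_symm_apply i
    calc colIdx T ((w * σ * w⁻¹) i) = (π : Equiv.Perm ℕ) (colIdx T (σ (w⁻¹ i))) :=
          colIdx_colPerm hμ hT π (hσ.1.mem_Icc hj)
      _ = (π : Equiv.Perm ℕ) (colIdx T (w⁻¹ i)) := by rw [hσ.2 _ hj]
      _ = colIdx T i := by rw [← colIdx_colPerm hμ hT π hj, hij]

theorem range_colPerm_le_normalizer (hμ : μ.cells.card = n) (hT : IsFilling μ T) :
    (colPerm hμ hT).range ≤ Subgroup.normalizer (colSubgroup n T : Set (Equiv.Perm ℕ)) := by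
  rintro _ ⟨π, rfl⟩
  rw [Subgroup.mem_normalizer_iff, colSubgroup_eq_suppInStab]
  refine fun σ => ⟨colPerm_conj_mem_colGroup hμ hT π, fun h => ?_⟩
  simpa [mul_assoc] using colPerm_conj_mem_colGroup hμ hT π⁻¹ h

theorem range_colPerm_le_rowGroup (hμ : μ.cells.card = n) (hT : IsFilling μ T) :
    (colPerm hμ hT).range ≤ suppInStab n (rowIdx T) := by
  rintro _ ⟨π, rfl⟩
  exact colPerm_mem_rowGroup hμ hT π

-- A permutation preserving rows and columns fixes every box, and `T` is injective on boxes.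
theorem rowGroup_inf_colGroup (hμ : μ.cells.card = n) (hT : IsFilling μ T) :
    suppInStab n (rowIdx T) ⊓ suppInStab n (colIdx T) = ⊥ := by
  refine (Subgroup.eq_bot_iff_forall _).mpr fun w ⟨hr, hc⟩ => Equiv.ext fun m => ?_
  by_cases hm : m ∈ Finset.Icc 1 n
  · have hpos : posOf T (w m) = posOf T m := Prod.ext (hr.2 m hm) (hc.2 m hm)
    rw [← (hT.posOf_mem_cells_and_apply hμ (hr.1.mem_Icc hm)).2, hpos,
      (hT.posOf_mem_cells_and_apply hμ hm).2, Equiv.Perm.one_apply]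
  · exact hr.1 m (by rw [Finset.mem_Icc] at hm; omega)

theorem IsFilling.eq_of_colPermFun_eq (hμ : μ.cells.card = n) (hT : IsFilling μ T)
    {π₁ π₂ : ℕ → ℕ} (hπ₁ : ∀ c, μ.colLen (π₁ c) = μ.colLen c)
    (hπ₂ : ∀ c, μ.colLen (π₂ c) = μ.colLen c) (h : colPermFun n T π₁ = colPermFun n T π₂)
    {p : ℕ × ℕ} (hp : p ∈ μ.cells) : π₁ p.2 = π₂ p.2 := by
  have h₁ := (hT.colPermFun_spec hμ hπ₁ (hT.apply_mem_Icc hμ hp)).2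
  rw [h, (hT.colPermFun_spec hμ hπ₂ (hT.apply_mem_Icc hμ hp)).2] at h₁
  have h₂ := congrArg Prod.snd h₁
  rw [show colIdx T (T p) = p.2 from congrArg Prod.snd (hT.posOf_apply hp)] at h₂
  exact h₂.symm

end ColumnPermutation

/-- The copy of `η` acting on `q, q + 1, …` through `i ↦ q + i`. -/
def shiftEnd (q : ℕ) : Equiv.Perm ℕ →* Function.End ℕ where
  toFun η c := if q ≤ c then q + η (c - q) else c
  map_one' := by
    funext c
    change (if q ≤ c then q + (1 : Equiv.Perm ℕ) (c - q) else c) = c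
    split_ifs <;> simp only [Equiv.Perm.one_apply]
    omega
  map_mul' η₁ η₂ := by
    funext c
    change _ = (fun c => if q ≤ c then q + η₁ (c - q) else c)
      (if q ≤ c then q + η₂ (c - q) else c)
    by_cases hc : q ≤ c <;> simp [hc]

def shiftPerm (q : ℕ) : Equiv.Perm ℕ →* Equiv.Perm ℕ := (shiftEnd q).toHomPerm

section ShiftPerm

variable {q t : ℕ} {η : Equiv.Perm ℕ}

theorem shiftPerm_apply_of_le {c : ℕ} (hc : q ≤ c) : shiftPerm q η c = q + η (c - q) :=
  if_pos hc

theorem shiftPerm_apply_of_notMem (hη : ∀ i, t ≤ i → η i = i) {c : ℕ}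
    (hc : ¬(q ≤ c ∧ c < q + t)) : shiftPerm q η c = c := by
  by_cases hqc : q ≤ c
  · rw [shiftPerm_apply_of_le hqc, hη _ (by omega)]
    omega
  · exact if_neg hqc

theorem shiftPerm_mem_Ico (hη : ∀ i, t ≤ i → η i = i) {c : ℕ} (hc : q ≤ c ∧ c < q + t) :
    q ≤ shiftPerm q η c ∧ shiftPerm q η c < q + t := by
  have : η (c - q) < t := by
    by_contra h
    have := η.injective (hη _ (not_lt.mp h))
    omega
  rw [shiftPerm_apply_of_le hc.1]
  omega

end ShiftPerm

section Eta

variable {n : ℕ} {μ : YoungDiagram} {T : Tab} {a : ℕ} {η : Equiv.Perm ℕ}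

theorem IsFilling.shiftPerm_apply_of_colLen_ne (hμ : μ.cells.card = n) (hT : IsFilling μ T)
    (ha : 1 ≤ a) (hη : ∀ i, taT n T a ≤ i → η i = i) {c : ℕ} (hc : μ.colLen c ≠ a) :
    shiftPerm (qaT n T a) η c = c :=
  shiftPerm_apply_of_notMem hη ((hT.colLen_eq_iff hμ ha c).not.mp hc)

theorem IsFilling.shiftPerm_mem_fiberStab (hμ : μ.cells.card = n) (hT : IsFilling μ T)
    (ha : 1 ≤ a) (hη : ∀ i, taT n T a ≤ i → η i = i) :
    shiftPerm (qaT n T a) η ∈ fiberStab μ.colLen := by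
  intro c
  by_cases hc : μ.colLen c = a
  · rw [hc, hT.colLen_eq_iff hμ ha]
    exact shiftPerm_mem_Ico hη ((hT.colLen_eq_iff hμ ha c).mp hc)
  · rw [hT.shiftPerm_apply_of_colLen_ne hμ ha hη hc]

theorem IsFilling.etaFun_eq_colPermFun (hμ : μ.cells.card = n) (hT : IsFilling μ T)
    (hη : ∀ i, taT n T a ≤ i → η i = i) :
    etaFun n T a η = colPermFun n T (shiftPerm (qaT n T a) η) := by
  funext m
  by_cases hm : m ∈ Finset.Icc 1 n
  · have hm' := Finset.mem_Icc.mp hm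
    rw [etaFun, colPermFun, if_pos hm]
    by_cases hc : qaT n T a ≤ colIdx T m ∧ colIdx T m < qaT n T a + taT n T a
    · rw [if_pos ⟨hm'.1, hm'.2, hc⟩, shiftPerm_apply_of_le hc.1]
    · rw [if_neg (by tauto), shiftPerm_apply_of_notMem hη hc]
      exact (hT.posOf_mem_cells_and_apply hμ hm).2.symm
  · rw [etaFun, if_neg (by rw [Finset.mem_Icc] at hm; tauto), colPermFun_of_notMem hm]

theorem IsFilling.etaFun_eq_colPerm (hμ : μ.cells.card = n) (hT : IsFilling μ T) (ha : 1 ≤ a)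
    (hη : ∀ i, taT n T a ≤ i → η i = i) :
    etaFun n T a η =
      ⇑(colPerm hμ hT ⟨shiftPerm (qaT n T a) η, hT.shiftPerm_mem_fiberStab hμ ha hη⟩) :=
  hT.etaFun_eq_colPermFun hμ hη

theorem IsFilling.etaSubgroup_le_range_colPerm (hμ : μ.cells.card = n) (hT : IsFilling μ T) :
    etaSubgroup n T ≤ (colPerm hμ hT).range := by
  refine (Subgroup.closure_le _).mpr ?_
  rintro w ⟨a, ha, η, hη, hw⟩
  exact ⟨_, DFunLike.coe_injective (hT.etaFun_eq_colPerm hμ ha hη ▸ hw).symm⟩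

theorem IsFilling.etaFun_mul (hμ : μ.cells.card = n) (hT : IsFilling μ T) (ha : 1 ≤ a)
    {η₁ η₂ : Equiv.Perm ℕ} (hη₁ : ∀ i, taT n T a ≤ i → η₁ i = i)
    (hη₂ : ∀ i, taT n T a ≤ i → η₂ i = i) :
    etaFun n T a (η₁ * η₂) = etaFun n T a η₁ ∘ etaFun n T a η₂ := by
  have hη : ∀ i, taT n T a ≤ i → (η₁ * η₂) i = i := fun i hi => by
    rw [Equiv.Perm.mul_apply, hη₂ i hi, hη₁ i hi]
  rw [hT.etaFun_eq_colPermFun hμ hη, hT.etaFun_eq_colPermFun hμ hη₁,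
    hT.etaFun_eq_colPermFun hμ hη₂, map_mul, Equiv.Perm.coe_mul,
    hT.colPermFun_comp hμ _ (hT.shiftPerm_mem_fiberStab hμ ha hη₂)]

-- For `a ≠ a'` the two column permutations have disjoint supports.
theorem IsFilling.etaFun_comm (hμ : μ.cells.card = n) (hT : IsFilling μ T) {a' : ℕ}
    (ha : 1 ≤ a) (ha' : 1 ≤ a') (hne : a ≠ a') {η' : Equiv.Perm ℕ}
    (hη : ∀ i, taT n T a ≤ i → η i = i) (hη' : ∀ i, taT n T a' ≤ i → η' i = i) :
    etaFun n T a η ∘ etaFun n T a' η' = etaFun n T a' η' ∘ etaFun n T a η := by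
  have hdisj : (shiftPerm (qaT n T a) η).Disjoint (shiftPerm (qaT n T a') η') := fun c => by
    by_cases hc : μ.colLen c = a
    · exact Or.inr (hT.shiftPerm_apply_of_colLen_ne hμ ha' hη' (hc ▸ hne))
    · exact Or.inl (hT.shiftPerm_apply_of_colLen_ne hμ ha hη hc)
  rw [hT.etaFun_eq_colPermFun hμ hη, hT.etaFun_eq_colPermFun hμ hη',
    ← hT.colPermFun_comp hμ _ (hT.shiftPerm_mem_fiberStab hμ ha' hη'),
    ← hT.colPermFun_comp hμ _ (hT.shiftPerm_mem_fiberStab hμ ha hη), ← Equiv.Perm.coe_mul,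
    ← Equiv.Perm.coe_mul, hdisj.commute.eq]

theorem IsFilling.etaFun_injective (hμ : μ.cells.card = n) (hT : IsFilling μ T) (ha : 1 ≤ a)
    {η₁ η₂ : Equiv.Perm ℕ} (hη₁ : ∀ i, taT n T a ≤ i → η₁ i = i)
    (hη₂ : ∀ i, taT n T a ≤ i → η₂ i = i) (h : etaFun n T a η₁ = etaFun n T a η₂) :
    η₁ = η₂ := by
  refine Equiv.ext fun i => ?_
  by_cases hi : taT n T a ≤ i
  · rw [hη₁ i hi, hη₂ i hi]
  have hcell : ((0 : ℕ), qaT n T a + i) ∈ μ.cells := by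
    rw [YoungDiagram.mem_cells, YoungDiagram.mem_iff_lt_colLen,
      (hT.colLen_eq_iff hμ ha _).mpr (by omega)]
    omega
  rw [hT.etaFun_eq_colPermFun hμ hη₁, hT.etaFun_eq_colPermFun hμ hη₂] at h
  have := hT.eq_of_colPermFun_eq hμ (hT.shiftPerm_mem_fiberStab hμ ha hη₁)
    (hT.shiftPerm_mem_fiberStab hμ ha hη₂) h hcell
  rw [shiftPerm_apply_of_le (by simp), shiftPerm_apply_of_le (by simp)] at this
  simpa using this

theorem IsFilling.etaSubgroup_le_rowGroup (hμ : μ.cells.card = n) (hT : IsFilling μ T) :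
    etaSubgroup n T ≤ suppInStab n (rowIdx T) :=
  (hT.etaSubgroup_le_range_colPerm hμ).trans (range_colPerm_le_rowGroup hμ hT)

theorem IsFilling.etaSubgroup_le_normalizer (hμ : μ.cells.card = n) (hT : IsFilling μ T) :
    etaSubgroup n T ≤ Subgroup.normalizer (colSubgroup n T : Set (Equiv.Perm ℕ)) :=
  (hT.etaSubgroup_le_range_colPerm hμ).trans (range_colPerm_le_normalizer hμ hT)

theorem IsFilling.etaSubgroup_inf_colSubgroup (hμ : μ.cells.card = n) (hT : IsFilling μ T) :
    etaSubgroup n T ⊓ colSubgroup n T = ⊥ := by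
  refine le_bot_iff.mp ((inf_le_inf_right _ (hT.etaSubgroup_le_rowGroup hμ)).trans ?_)
  rw [colSubgroup_eq_suppInStab, rowGroup_inf_colGroup hμ hT]

theorem extColSubgroup_eq_sup (n : ℕ) (T : Tab) :
    extColSubgroup n T = etaSubgroup n T ⊔ colSubgroup n T :=
  (Subgroup.closure_union _ _).trans (sup_comm _ _)

end Eta

/-- (i) Each `η_T` is a permutation lying in the row group `R(T)`, and the
assignments `η ↦ η_T` combine to an injective group homomorphism `Π_a S_{t_a} → R(T)`.
(ii) The resulting subgroup normalizes `C(T)` and intersects it trivially, so together with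
`C(T)` it generates an internal semidirect product `C̃(T)`.
(iii) `sgn~(η_T σ) := sgn(σ)` is a well-defined group homomorphism `C̃(T) → {±1}`. -/
theorem statement_15 (n : ℕ) (μ : YoungDiagram) (hμ : μ.cells.card = n) (T : Tab)
    (hT : IsFilling μ T) :
    -- (i)
    ((∀ a, 1 ≤ a → ∀ η : Equiv.Perm ℕ, (∀ i, taT n T a ≤ i → η i = i) →
        (∃ w : Equiv.Perm ℕ, ⇑w = etaFun n T a η) ∧
        (∀ w : Equiv.Perm ℕ, ⇑w = etaFun n T a η → w ∈ rowGroupSet n T)) ∧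
      (∀ a, 1 ≤ a → ∀ η₁ η₂ : Equiv.Perm ℕ, (∀ i, taT n T a ≤ i → η₁ i = i) →
        (∀ i, taT n T a ≤ i → η₂ i = i) →
        etaFun n T a (η₁ * η₂) = etaFun n T a η₁ ∘ etaFun n T a η₂) ∧
      (∀ a a', 1 ≤ a → 1 ≤ a' → a ≠ a' → ∀ η η' : Equiv.Perm ℕ,
        (∀ i, taT n T a ≤ i → η i = i) → (∀ i, taT n T a' ≤ i → η' i = i) →
        etaFun n T a η ∘ etaFun n T a' η' = etaFun n T a' η' ∘ etaFun n T a η) ∧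
      (∀ a, 1 ≤ a → ∀ η₁ η₂ : Equiv.Perm ℕ, (∀ i, taT n T a ≤ i → η₁ i = i) →
        (∀ i, taT n T a ≤ i → η₂ i = i) →
        etaFun n T a η₁ = etaFun n T a η₂ → η₁ = η₂)) ∧
    -- (ii)
    ((∀ w ∈ etaSubgroup n T, ∀ σ ∈ colSubgroup n T, w * σ * w⁻¹ ∈ colSubgroup n T) ∧
      etaSubgroup n T ⊓ colSubgroup n T = ⊥ ∧
      extColSubgroup n T = colSubgroup n T ⊔ etaSubgroup n T ∧
      (∀ g ∈ extColSubgroup n T, ∃! p : Equiv.Perm ℕ × Equiv.Perm ℕ,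
        p.1 ∈ etaSubgroup n T ∧ p.2 ∈ colSubgroup n T ∧ g = p.1 * p.2)) ∧
    -- (iii)
    (∃ f : Equiv.Perm ℕ → ℤ,
      (∀ w ∈ etaSubgroup n T, ∀ σ ∈ colSubgroup n T, f (w * σ) = signOn n σ) ∧
      (∀ g ∈ extColSubgroup n T, f g = 1 ∨ f g = -1) ∧
      (∀ g₁ ∈ extColSubgroup n T, ∀ g₂ ∈ extColSubgroup n T,
        f (g₁ * g₂) = f g₁ * f g₂)) := by
  have hnorm := hT.etaSubgroup_le_normalizer hμ
  have hdisj := hT.etaSubgroup_inf_colSubgroup hμ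
  have hext : ∀ g ∈ extColSubgroup n T, g ∈ etaSubgroup n T ⊔ colSubgroup n T := fun g hg =>
    extColSubgroup_eq_sup n T ▸ hg
  obtain ⟨f, hf, hf_mul⟩ := exists_extend_mul_of_le_normalizer hnorm hdisj (signOn n)
    (fun σ₁ h₁ σ₂ h₂ => signOn_mul (.of_mem_colSubgroup h₁) (.of_mem_colSubgroup h₂))
    (fun w hw σ hσ => signOn_conj (hT.etaSubgroup_le_rowGroup hμ hw).1 (.of_mem_colSubgroup hσ))
  refine ⟨⟨fun a ha η hη => ⟨⟨_, (hT.etaFun_eq_colPerm hμ ha hη).symm⟩, fun w hw => ?_⟩,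
      fun a ha η₁ η₂ => hT.etaFun_mul hμ ha, fun a a' ha ha' hne η η' => hT.etaFun_comm hμ ha ha' hne,
      fun a ha η₁ η₂ => hT.etaFun_injective hμ ha⟩,
    ⟨fun w hw σ => (Subgroup.mem_normalizer_iff.mp (hnorm hw) σ).mp, hdisj,
      (extColSubgroup_eq_sup n T).trans (sup_comm _ _),
      fun g hg => existsUnique_mul_of_le_normalizer hnorm hdisj (hext g hg)⟩,
    f, hf, fun g hg => ?_, fun g₁ hg₁ g₂ hg₂ => hf_mul g₁ (hext g₁ hg₁) g₂ (hext g₂ hg₂)⟩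
  · rw [DFunLike.coe_injective (hw.trans (hT.etaFun_eq_colPerm hμ ha hη))]
    exact colPerm_mem_rowGroup hμ hT _
  · obtain ⟨⟨w, σ⟩, ⟨hw, hσ, rfl⟩, -⟩ := existsUnique_mul_of_le_normalizer hnorm hdisj (hext g hg)
    rw [hf w hw σ hσ]
    exact signOn_eq_one_or (.of_mem_colSubgroup hσ)

end HigherSpecht
end
end

section
/- Fix λ ⊢ n, 1 ≤ k ≤ n, and a standard Young tableau S of shape λ. The map I ↦ h^S_I is a bijection from the collection {I : Dsi^c(S) ⊆ I ⊆ {1,…,n−1}, |I| = k−1} onto the set H^S_k of all vectors h = (h_r)_{r=1}^n of non-negative integers satisfying h_r = 0 for every r > n−k and Σ_{r=1}^{n−k} h_r < k − |Dsi^c(S)|. -/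
open MvPolynomial

noncomputable section

namespace HigherSpecht

open scoped Classical

/-! Put `E := {1,…,n-1} \ Dsi^c(S)` and `J := {1,…,n-1} \ I`, so that `I ↦ J` matches the
sets `I` of the statement with the `(n-k)`-subsets of `E`. Then `h_r` is the number of elements
of `E \ J` with exactly `r` elements of `J` below them: the size of the `r`-th gap of `J` inside
`E`. These gap sizes determine a `Z`-subset `J ⊆ E`, by induction on `E`: inserting a new
maximum `m` into both `E` and `J` leaves them unchanged, while inserting `m` into `E` alone adds
one to the last gap `h_Z`, so `h_Z = 0` tells whether `m ∈ J`. The same recursion shows that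
every vector supported on `1..Z` with sum at most `|E| - Z` occurs. -/

open Finset

section Gaps

variable {α : Type*} [LinearOrder α]

def numBelow (J : Finset α) (x : α) : ℕ := #{j ∈ J | j < x}

def gapSizes (E J : Finset α) (r : ℕ) : ℕ :=
  if 1 ≤ r then #{e ∈ E \ J | numBelow J e = r} else 0

def admissibleGaps (N Z : ℕ) : Set (ℕ → ℕ) :=
  {h | h 0 = 0 ∧ (∀ r, Z < r → h r = 0) ∧ ∑ r ∈ Icc 1 Z, h r + Z ≤ N}

lemma numBelow_le_card (J : Finset α) (x : α) : numBelow J x ≤ #J :=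
  card_filter_le _ _

lemma gapSizes_eq_zero_of_card_lt {E J : Finset α} {r : ℕ} (hr : #J < r) :
    gapSizes E J r = 0 := by
  rw [gapSizes, if_pos (by omega), card_eq_zero, filter_eq_empty_iff]
  exact fun e _ he => by have := numBelow_le_card J e; omega

lemma sum_gapSizes_le (E J : Finset α) :
    ∑ r ∈ Icc 1 #J, gapSizes E J r ≤ #(E \ J) := calc
  ∑ r ∈ Icc 1 #J, gapSizes E J r = ∑ r ∈ Icc 1 #J, #{e ∈ E \ J | numBelow J e = r} :=
    sum_congr rfl fun _ hr => if_pos (mem_Icc.mp hr).1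
  _ = #{e ∈ E \ J | numBelow J e ∈ Icc 1 #J} := sum_card_fiberwise_eq_card_filter _ _ _
  _ ≤ #(E \ J) := card_filter_le _ _

lemma gapSizes_empty_eq {N : ℕ} {h : ℕ → ℕ} (hh : h ∈ admissibleGaps N 0)
    (E : Finset α) : gapSizes E ∅ = h := by
  funext r
  rcases r with _ | r
  · exact hh.1.symm
  · simp [gapSizes, numBelow, hh.2.1 _ r.succ_pos]

lemma gapSizes_mem_admissibleGaps {E J : Finset α} (hJ : J ⊆ E) :
    gapSizes E J ∈ admissibleGaps #E #J := by
  refine ⟨rfl, fun r hr => gapSizes_eq_zero_of_card_lt hr, ?_⟩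
  have := sum_gapSizes_le E J
  have := card_sdiff_of_subset hJ
  have := card_le_card hJ
  omega

variable {E J : Finset α} {m : α}

lemma gapSizes_insert_max_insert (hm : ∀ e ∈ E, e < m) :
    gapSizes (insert m E) (insert m J) = gapSizes E J := by
  have hmE : m ∉ E := fun h => lt_irrefl _ (hm m h)
  have hsdiff : insert m E \ insert m J = E \ J := by
    rw [insert_sdiff_insert, sdiff_insert_of_notMem hmE]
  have hbelow : ∀ e ∈ E \ J, numBelow (insert m J) e = numBelow J e := fun e he => by
    rw [numBelow, filter_insert, if_neg (not_lt.mpr (hm e (mem_sdiff.mp he).1).le)]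
    rfl
  funext r
  simp only [gapSizes, hsdiff]
  congr 2
  exact filter_congr fun e he => by rw [hbelow e he]

lemma gapSizes_insert_max (hm : ∀ e ∈ E, e < m) (hJ : J ⊆ E) (hne : J.Nonempty) :
    gapSizes (insert m E) J = gapSizes E J + Pi.single #J 1 := by
  have hmJ : m ∉ J := fun h => lt_irrefl _ (hm m (hJ h))
  have hmE : m ∉ E \ J := fun h => lt_irrefl _ (hm m (mem_sdiff.mp h).1)
  have hbelow : numBelow J m = #J := by
    rw [numBelow, filter_true_of_mem fun j hj => hm j (hJ hj)]
  funext r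
  simp only [gapSizes, insert_sdiff_of_notMem _ hmJ, filter_insert, hbelow, Pi.add_apply]
  by_cases hr : #J = r
  · subst hr
    simp [hne, card_insert_of_notMem (fun h => hmE (mem_filter.mp h).1)]
  · simp [hr, Ne.symm hr]

lemma gapSizes_insert_max_card_eq_zero_iff (hm : ∀ e ∈ E, e < m) (hJ : J ⊆ insert m E)
    (hne : J.Nonempty) : gapSizes (insert m E) J #J = 0 ↔ m ∈ J := by
  constructor
  · intro h
    by_contra hmJ
    rw [gapSizes_insert_max hm ((subset_insert_iff_of_notMem hmJ).mp hJ) hne] at h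
    simp at h
  · intro hmJ
    rw [← insert_erase hmJ, gapSizes_insert_max_insert hm,
      card_insert_of_notMem (notMem_erase m J)]
    exact gapSizes_eq_zero_of_card_lt (Nat.lt_succ_self _)

lemma eq_of_gapSizes_eq {J J' : Finset α} (hJ : J ⊆ E) (hJ' : J' ⊆ E) (hcard : #J = #J')
    (h : gapSizes E J = gapSizes E J') : J = J' := by
  induction E using Finset.induction_on_max generalizing J J' with
  | empty => rw [subset_empty.mp hJ, subset_empty.mp hJ']
  | insert m E hm ih =>
    rcases J.eq_empty_or_nonempty with rfl | hne
    · exact (card_eq_zero.mp hcard.symm).symm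
    have hne' : J'.Nonempty := card_pos.mp (hcard ▸ hne.card_pos)
    have hmem : m ∈ J ↔ m ∈ J' := by
      rw [← gapSizes_insert_max_card_eq_zero_iff hm hJ hne,
        ← gapSizes_insert_max_card_eq_zero_iff hm hJ' hne', h, hcard]
    by_cases hmJ : m ∈ J
    · have hmJ' := hmem.mp hmJ
      rw [← insert_erase hmJ, ← insert_erase hmJ', gapSizes_insert_max_insert hm,
        gapSizes_insert_max_insert hm] at h
      rw [← insert_erase hmJ, ← insert_erase hmJ', ih (subset_insert_iff.mp hJ)
        (subset_insert_iff.mp hJ') (by simp [card_erase_of_mem, hmJ, hmJ', hcard]) h]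
    · have hmJ' := mt hmem.mpr hmJ
      have hJE := (subset_insert_iff_of_notMem hmJ).mp hJ
      have hJE' := (subset_insert_iff_of_notMem hmJ').mp hJ'
      rw [gapSizes_insert_max hm hJE hne, gapSizes_insert_max hm hJE' hne', hcard] at h
      exact ih hJE hJE' hcard (add_right_cancel h)

lemma exists_gapSizes_eq {Z : ℕ} {h : ℕ → ℕ} (hh : h ∈ admissibleGaps #E Z) :
    ∃ J ⊆ E, #J = Z ∧ gapSizes E J = h := by
  induction E using Finset.induction_on_max generalizing Z h with
  | empty =>
    obtain rfl : Z = 0 := by have := hh.2.2; rw [card_empty] at this; omega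
    exact ⟨∅, empty_subset _, card_empty, gapSizes_empty_eq hh _⟩
  | insert m E hm ih =>
    have hmE : m ∉ E := fun h => lt_irrefl m (hm m h)
    rcases Z with _ | Z
    · exact ⟨∅, empty_subset _, card_empty, gapSizes_empty_eq hh _⟩
    obtain ⟨h0, hvanish, hsum⟩ := hh
    rw [card_insert_of_notMem hmE, sum_Icc_succ_top (by omega)] at hsum
    by_cases htop : h (Z + 1) = 0
    · have hh' : h ∈ admissibleGaps #E Z := by
        refine ⟨h0, fun r hr => ?_, by omega⟩
        rcases (Nat.succ_le_of_lt hr).eq_or_lt with rfl | hr'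
        · exact htop
        · exact hvanish r hr'
      obtain ⟨J, hJ, hcard, rfl⟩ := ih hh'
      refine ⟨insert m J, insert_subset_insert m hJ, ?_, gapSizes_insert_max_insert hm⟩
      rw [card_insert_of_notMem (fun h => hmE (hJ h)), hcard]
    · set h' := Function.update h (Z + 1) (h (Z + 1) - 1)
      have hsum' : ∑ r ∈ Icc 1 Z, h' r = ∑ r ∈ Icc 1 Z, h r :=
        sum_congr rfl fun r hr => Function.update_of_ne (by have := (mem_Icc.mp hr).2; omega) _ _
      have hh' : h' ∈ admissibleGaps #E (Z + 1) := by
        refine ⟨by simp [h', h0], fun r hr => by simp [h', hvanish r hr, hr.ne'], ?_⟩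
        rw [sum_Icc_succ_top (by omega), hsum']
        simp only [h', Function.update_self]
        omega
      obtain ⟨J, hJ, hcard, hgap⟩ := ih hh'
      refine ⟨J, hJ.trans (subset_insert m E), hcard, ?_⟩
      rw [gapSizes_insert_max hm hJ (card_pos.mp (by omega)), hgap, hcard]
      funext r
      by_cases hr : r = Z + 1
      · subst hr
        simp only [h', Pi.add_apply, Function.update_self, Pi.single_eq_same]
        omega
      · simp [h', hr]

theorem bijOn_gapSizes (E : Finset α) (Z : ℕ) :
    Set.BijOn (gapSizes E) {J | J ⊆ E ∧ #J = Z} (admissibleGaps #E Z) :=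
  ⟨fun _ ⟨hJ, hcard⟩ => hcard ▸ gapSizes_mem_admissibleGaps hJ,
    fun _ ⟨hJ, hcard⟩ _ ⟨hJ', hcard'⟩ h =>
      eq_of_gapSizes_eq hJ hJ' (hcard.trans hcard'.symm) h,
    fun _ hh => by
      obtain ⟨J, hJ, hcard, hgap⟩ := exists_gapSizes_eq hh
      exact ⟨J, ⟨hJ, hcard⟩, hgap⟩⟩

theorem bijOn_sdiff {U D : Finset α} (hD : D ⊆ U) {a b : ℕ} (hab : a + b = #U) :
    Set.BijOn (U \ ·) {I | D ⊆ I ∧ I ⊆ U ∧ #I = a} {J | J ⊆ U \ D ∧ #J = b} := by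
  refine Set.InvOn.bijOn (f' := (U \ ·)) ⟨fun I hI => Finset.sdiff_sdiff_eq_self hI.2.1,
    fun J hJ => Finset.sdiff_sdiff_eq_self (hJ.1.trans sdiff_subset)⟩ ?_ ?_
  · rintro I ⟨hDI, hIU, hI⟩
    refine ⟨sdiff_subset_sdiff subset_rfl hDI, ?_⟩
    rw [card_sdiff_of_subset hIU]
    omega
  · rintro J ⟨hJ, hcard⟩
    refine ⟨fun x hx => mem_sdiff.mpr ⟨hD hx, fun h => (mem_sdiff.mp (hJ h)).2 hx⟩,
      sdiff_subset, ?_⟩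
    rw [card_sdiff_of_subset (hJ.trans sdiff_subset)]
    omega

end Gaps

lemma Dsic_subset_Ioo (n : ℕ) (S : Tab) : Dsic n S ⊆ Ioo 0 n := by
  intro x hx
  simp only [Dsic, DsiSet, mem_image, mem_filter, mem_Ioo] at hx ⊢
  omega

lemma hSI_eq_gapSizes {n : ℕ} {I : Finset ℕ} (S : Tab) (hI : I ⊆ Ioo 0 n) :
    hSI n I S = gapSizes (Ioo 0 n \ Dsic n S) (Ioo 0 n \ I) := by
  funext r
  simp only [hSI, gapSizes, numBelow, rIdxI, sdiff_sdiff_sdiff_cancel_left hI]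
  congr

theorem statement_18_general (n k : ℕ) (S : Tab) (hk₁ : 1 ≤ k) (hk₂ : k ≤ n) :
    Set.BijOn (fun I => hSI n I S)
      {I : Finset ℕ | Dsic n S ⊆ I ∧ I ⊆ Finset.Ioo 0 n ∧ I.card = k - 1}
      {h : ℕ → ℕ | h 0 = 0 ∧ (∀ r, n - k < r → h r = 0) ∧
        ∑ r ∈ Finset.Icc 1 (n - k), h r < k - (Dsic n S).card} := by
  have hD := Dsic_subset_Ioo n S
  have hcard : #(Ioo 0 n \ Dsic n S) = n - 1 - #(Dsic n S) := by
    rw [card_sdiff_of_subset hD, Nat.card_Ioo, Nat.sub_zero]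
  have htarget : {h : ℕ → ℕ | h 0 = 0 ∧ (∀ r, n - k < r → h r = 0) ∧
      ∑ r ∈ Icc 1 (n - k), h r < k - #(Dsic n S)} =
      admissibleGaps #(Ioo 0 n \ Dsic n S) (n - k) := by
    have hDcard := card_le_card hD
    rw [Nat.card_Ioo] at hDcard
    ext h
    exact and_congr_right fun _ => and_congr_right fun _ => by rw [hcard]; omega
  rw [htarget]
  exact ((bijOn_gapSizes _ _).comp (bijOn_sdiff hD (by rw [Nat.card_Ioo]; omega))).congr
    fun I hI => (hSI_eq_gapSizes S hI.2.1).symm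

/-- The map `I ↦ h^S_I` is a bijection from
`{I : Dsi^c(S) ⊆ I ⊆ {1,…,n-1}, |I| = k-1}` onto the set `H^S_k` of vectors `h` with
`h_r = 0` for `r > n-k` and `Σ_{r=1}^{n-k} h_r < k - |Dsi^c(S)|`. -/
theorem statement_18 (n k : ℕ) (μ : YoungDiagram) (hμ : μ.cells.card = n) (S : Tab)
    (hS : IsStandard μ S) (hk₁ : 1 ≤ k) (hk₂ : k ≤ n) :
    Set.BijOn (fun I => hSI n I S)
      {I : Finset ℕ | Dsic n S ⊆ I ∧ I ⊆ Finset.Ioo 0 n ∧ I.card = k - 1}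
      {h : ℕ → ℕ | h 0 = 0 ∧ (∀ r, n - k < r → h r = 0) ∧
        ∑ r ∈ Finset.Icc 1 (n - k), h r < k - (Dsic n S).card} :=
  statement_18_general n k S hk₁ hk₂

end HigherSpecht
end
end
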